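/- arXiv:1804.03227 — 2 statements merged into one kernel-verified Lean document; each statement's English description precedes it below -/
import Mathlib

section
/- Index-2 admissible projector construction: let E₀ = E, A₀ = A, Q₀ a projector onto ker(E₀), P₀ = I − Q₀, E₁ = E₀ − A₀Q₀, A₁ = A₀P₀, Q₁ a projector onto ker(E₁), and suppose E₂ = E₁ − A₁Q₁ is invertible. Then Q₁* = −Q₁E₂⁻¹A₁ satisfies: Q₁* is a projector onto ker(E₁) (i.e., E₁Q₁* = 0 and (Q₁*)² = Q₁*), and Q₁*Q₀ = 0. -/
/-- Index-2 admissible projector construction: `Q₁* = -Q₁E₂⁻¹A₁` is a projector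
onto `ker(E₁)` and satisfies `Q₁* Q₀ = 0`. -/
theorem index2_admissible_construction (n : ℕ)
    (E A : Matrix (Fin n) (Fin n) ℝ)
    (Q₀ : Matrix (Fin n) (Fin n) ℝ)
    (hQ0 : E * Q₀ = 0) (hQ0idem : Q₀ * Q₀ = Q₀)
    (P₀ : Matrix (Fin n) (Fin n) ℝ) (hP0 : P₀ = 1 - Q₀)
    (E₁ : Matrix (Fin n) (Fin n) ℝ) (hE1 : E₁ = E - A * Q₀)
    (A₁ : Matrix (Fin n) (Fin n) ℝ) (hA1 : A₁ = A * P₀)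
    (Q₁ : Matrix (Fin n) (Fin n) ℝ)
    (hQ1 : E₁ * Q₁ = 0) (hQ1idem : Q₁ * Q₁ = Q₁)
    (E₂ : Matrix (Fin n) (Fin n) ℝ) (hE2 : E₂ = E₁ - A₁ * Q₁)
    (hE2inv : IsUnit E₂.det) :
    E₁ * (-(Q₁ * E₂⁻¹ * A₁)) = 0 ∧
    (-(Q₁ * E₂⁻¹ * A₁)) * (-(Q₁ * E₂⁻¹ * A₁)) = -(Q₁ * E₂⁻¹ * A₁) ∧
    (-(Q₁ * E₂⁻¹ * A₁)) * Q₀ = 0 := by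
  have hEQ : E₂ * Q₁ = -(A₁ * Q₁) := by
    rw [hE2, Matrix.sub_mul, hQ1, Matrix.mul_assoc, hQ1idem, zero_sub]
  have hinv : E₂⁻¹ * (A₁ * Q₁) = -Q₁ := by
    have := congrArg (fun M => E₂⁻¹ * M) hEQ
    simp only [← Matrix.mul_assoc, Matrix.nonsing_inv_mul E₂ hE2inv, Matrix.one_mul,
      Matrix.mul_neg] at this
    rw [Matrix.mul_assoc] at this
    conv_rhs => rw [this, neg_neg]
  have hAQ0 : A₁ * Q₀ = 0 := by
    rw [hA1, hP0, Matrix.mul_assoc, Matrix.sub_mul, Matrix.one_mul, hQ0idem]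
    simp
  refine ⟨?_, ?_, ?_⟩
  · rw [Matrix.mul_neg, ← Matrix.mul_assoc, ← Matrix.mul_assoc, hQ1]
    simp
  · have : Q₁ * E₂⁻¹ * A₁ * (Q₁ * E₂⁻¹ * A₁)
        = Q₁ * (E₂⁻¹ * (A₁ * Q₁)) * (E₂⁻¹ * A₁) := by
      noncomm_ring
    rw [Matrix.neg_mul, Matrix.mul_neg, neg_neg, this, hinv]
    simp [Matrix.mul_neg, Matrix.neg_mul, ← Matrix.mul_assoc, hQ1idem]
  · rw [Matrix.neg_mul, Matrix.mul_assoc, Matrix.mul_assoc, hAQ0]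
    simp
end

section
/- In the index-2 admissible projector construction, Q₁* = −Q₁E₂⁻¹A₁ satisfies Q₁*Q₁ = Q₁ and Q₁Q₁* = Q₁*; consequently Q₁* is idempotent. -/
/-- In the index-2 admissible projector construction, `Q₁* = -Q₁E₂⁻¹A₁` satisfies
`Q₁*Q₁ = Q₁`, `Q₁Q₁* = Q₁*`, and hence is idempotent. -/
theorem index2_Qstar_properties (n : ℕ)
    (E₁ A₁ : Matrix (Fin n) (Fin n) ℝ)
    (Q₁ : Matrix (Fin n) (Fin n) ℝ)
    (hQ1 : E₁ * Q₁ = 0) (hQ1idem : Q₁ * Q₁ = Q₁)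
    (E₂ : Matrix (Fin n) (Fin n) ℝ) (hE2 : E₂ = E₁ - A₁ * Q₁)
    (hE2inv : IsUnit E₂.det) :
    (-(Q₁ * E₂⁻¹ * A₁)) * Q₁ = Q₁ ∧
    Q₁ * (-(Q₁ * E₂⁻¹ * A₁)) = -(Q₁ * E₂⁻¹ * A₁) ∧
    (-(Q₁ * E₂⁻¹ * A₁)) * (-(Q₁ * E₂⁻¹ * A₁)) = -(Q₁ * E₂⁻¹ * A₁) := by
  have hEQ : E₂ * Q₁ = -(A₁ * Q₁) := by
    rw [hE2, Matrix.sub_mul, Matrix.mul_assoc, hQ1idem, hQ1, zero_sub]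
  have hinv : E₂⁻¹ * (A₁ * Q₁) = -Q₁ := by
    have := congrArg (fun M => E₂⁻¹ * M) hEQ
    simp only [← Matrix.mul_assoc, Matrix.nonsing_inv_mul E₂ hE2inv, Matrix.one_mul] at this
    rw [Matrix.mul_neg] at this
    rw [eq_comm, neg_eq_iff_eq_neg] at this
    exact this
  have h1 : (-(Q₁ * E₂⁻¹ * A₁)) * Q₁ = Q₁ := by
    have : Q₁ * E₂⁻¹ * A₁ * Q₁ = Q₁ * (E₂⁻¹ * (A₁ * Q₁)) := by
      noncomm_ring
    rw [Matrix.neg_mul, this, hinv, Matrix.mul_neg, hQ1idem, neg_neg]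
  have h2 : Q₁ * (-(Q₁ * E₂⁻¹ * A₁)) = -(Q₁ * E₂⁻¹ * A₁) := by
    rw [Matrix.mul_neg, ← Matrix.mul_assoc, ← Matrix.mul_assoc, hQ1idem]
  refine ⟨h1, h2, ?_⟩
  calc (-(Q₁ * E₂⁻¹ * A₁)) * (-(Q₁ * E₂⁻¹ * A₁))
      = ((-(Q₁ * E₂⁻¹ * A₁)) * Q₁) * (-(E₂⁻¹ * A₁)) := by noncomm_ring
    _ = Q₁ * (-(E₂⁻¹ * A₁)) := by rw [h1]
    _ = -(Q₁ * E₂⁻¹ * A₁) := by noncomm_ring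
end
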